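/- arXiv:2404.02329 — 2 statements merged into one kernel-verified Lean document; each statement's English description precedes it below -/
import Mathlib

section
/- For any real ε > 0 and any integer m ≥ 2, we have 1 - (1 - 1/m^{1+ε})^m ≥ 1/m^ε - 1/(2 m^{2ε}). -/
lemma aux_bonferroni (x : ℝ) (hx0 : 0 ≤ x) (hx1 : x ≤ 1) :
    ∀ m : ℕ, (1 - x) ^ m ≤ 1 - m * x + (m : ℝ) ^ 2 / 2 * x ^ 2 := by
  intro m
  induction m with
  | zero => norm_num
  | succ n ih =>
    have h1 : (0:ℝ) ≤ 1 - x := by linarith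
    have h2 := mul_le_mul_of_nonneg_left ih h1
    calc (1 - x) ^ (n + 1) = (1 - x) * (1 - x) ^ n := by ring
      _ ≤ (1 - x) * (1 - n * x + (n : ℝ) ^ 2 / 2 * x ^ 2) := h2
      _ ≤ 1 - (↑(n+1)) * x + ((↑(n+1) : ℝ)) ^ 2 / 2 * x ^ 2 := by
          push_cast
          nlinarith [sq_nonneg x, mul_nonneg (mul_nonneg hx0 hx0) hx0,
            mul_nonneg (mul_nonneg (mul_nonneg (Nat.cast_nonneg n) (Nat.cast_nonneg n)) hx0) (mul_nonneg hx0 hx0)]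

theorem stmt_1 (ε : ℝ) (hε : 0 < ε) (m : ℕ) (hm : 2 ≤ m) :
    1 - (1 - 1 / (m : ℝ) ^ (1 + ε)) ^ m ≥ 1 / (m : ℝ) ^ ε - 1 / (2 * (m : ℝ) ^ (2 * ε)) := by
  have hm1 : (1:ℝ) ≤ m := by exact_mod_cast Nat.one_le_of_lt hm
  have hmpos : (0:ℝ) < m := by linarith
  have hA : (0:ℝ) < (m:ℝ) ^ ε := Real.rpow_pos_of_pos hmpos ε
  have hA1 : (1:ℝ) ≤ (m:ℝ) ^ ε := Real.one_le_rpow hm1 hε.le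
  have hsplit : (m:ℝ) ^ (1 + ε) = m * (m:ℝ) ^ ε := by
    rw [Real.rpow_add hmpos, Real.rpow_one]
  have h2e : (m:ℝ) ^ (2 * ε) = ((m:ℝ) ^ ε) ^ 2 := by
    rw [mul_comm, Real.rpow_mul hmpos.le]
    norm_num
  set x : ℝ := 1 / (m : ℝ) ^ (1 + ε) with hx
  have hxpos : 0 < x := by positivity
  have hx1 : x ≤ 1 := by
    rw [hx, hsplit, div_le_one (by positivity)]
    nlinarith
  have hb := aux_bonferroni x hxpos.le hx1 m
  have hmx : (m:ℝ) * x = 1 / (m:ℝ) ^ ε := by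
    rw [hx, hsplit]
    field_simp
  have hmx2 : (m:ℝ) ^ 2 / 2 * x ^ 2 = 1 / (2 * (m:ℝ) ^ (2 * ε)) := by
    rw [hx, hsplit, h2e]
    field_simp
  rw [ge_iff_le, ← hmx, ← hmx2]
  linarith
end

section
/- For every integer n with 4 ≤ n ≤ 100, the least prime in every coprime residue class modulo n is at most 3·φ(n)·log(n)·log(φ(n)), i.e. P(n) < 3 φ(n) log(n) log(φ(n)). -/
/-!
The least prime of each coprime class `a mod n` is found by searching `a, a + n, a + 2n, …` with
trial division, and the right-hand side is bounded below by a natural number through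
`log m ≥ (log 2 / 2) ⌊log₂ m²⌋` and `(log 2)² > 12/25`. Comparing the two for all
`4 ≤ n ≤ 100` is then a single finite computation.
-/

noncomputable def leastPrime (n a : ℕ) : ℕ := sInf {p : ℕ | Nat.Prime p ∧ p % n = a % n}

noncomputable def P (n : ℕ) : ℕ :=
  Finset.sup ((Finset.range n).filter fun a => Nat.Coprime a n) (leastPrime n)

def Nat.isPrimeByTrialDivision (p : ℕ) : Bool :=
  2 ≤ p && (List.range' 2 (p.sqrt - 1)).all fun d => p % d != 0

theorem Nat.prime_of_isPrimeByTrialDivision {p : ℕ} (h : isPrimeByTrialDivision p = true) :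
    p.Prime := by
  simp only [Nat.isPrimeByTrialDivision, Bool.and_eq_true, decide_eq_true_eq, List.all_eq_true,
    List.mem_range'_1, bne_iff_ne, ne_eq] at h
  obtain ⟨two_le, no_divisor⟩ := h
  refine Nat.prime_def_le_sqrt.mpr ⟨two_le, fun m two_le_m hm hdvd => ?_⟩
  exact no_divisor m ⟨two_le_m, by omega⟩ (Nat.mod_eq_zero_of_dvd hdvd)

theorem leastPrime_le {n a p : ℕ} (hp : p.Prime) (hpa : p % n = a % n) : leastPrime n a ≤ p :=
  Nat.sInf_le ⟨hp, hpa⟩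

def coprimeClassesHavePrimeLE (n B : ℕ) : Bool :=
  (List.range n).all fun a => Nat.gcd a n != 1 ||
    (List.range (B / n + 1)).any fun k => a + k * n ≤ B && Nat.isPrimeByTrialDivision (a + k * n)

theorem P_le_of_coprimeClassesHavePrimeLE {n B : ℕ} (h : coprimeClassesHavePrimeLE n B = true) :
    P n ≤ B := by
  refine Finset.sup_le fun a ha => ?_
  rw [Finset.mem_filter, Finset.mem_range] at ha
  simp only [coprimeClassesHavePrimeLE, List.all_eq_true, List.mem_range, Bool.or_eq_true,
    bne_iff_ne, List.any_eq_true, Bool.and_eq_true, decide_eq_true_eq] at h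
  obtain h | ⟨k, -, hle, hprime⟩ := h a ha.1
  · exact absurd ha.2 h
  · refine (leastPrime_le (Nat.prime_of_isPrimeByTrialDivision hprime) ?_).trans hle
    simp

theorem Nat.log_mul_log_le_log (b : ℕ) {m : ℕ} (hm : m ≠ 0) :
    (Nat.log b m : ℝ) * Real.log b ≤ Real.log m := by
  rcases Nat.lt_or_ge 1 b with hb | hb
  · have hpow : ((b ^ Nat.log b m : ℕ) : ℝ) ≤ m := by exact_mod_cast Nat.pow_log_le_self b hm
    calc (Nat.log b m : ℝ) * Real.log b = Real.log ((b ^ Nat.log b m : ℕ) : ℝ) := by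
          rw [Nat.cast_pow, Real.log_pow]
      _ ≤ Real.log m := Real.log_le_log (by positivity) hpow
  · rw [Nat.log_of_left_le_one hb, Nat.cast_zero, zero_mul]
    exact Real.log_natCast_nonneg m

-- Squaring `m` halves the loss from the floor; without it the bound fails at `n = 6`.
def totientLogBound (n : ℕ) : ℕ :=
  9 * n.totient * Nat.log 2 (n ^ 2) * Nat.log 2 (n.totient ^ 2) / 25

theorem totientLogBound_lt {n : ℕ} (hn : 3 ≤ n) :
    (totientLogBound n : ℝ) < 3 * (n.totient : ℝ) * Real.log n * Real.log n.totient := by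
  set φn := n.totient
  set a := Nat.log 2 (n ^ 2)
  set b := Nat.log 2 (φn ^ 2)
  have two_le_φn : 2 ≤ φn := by
    have : φn ≠ 1 := fun h => by rcases Nat.totient_eq_one_iff.mp h with h | h <;> omega
    have : 0 < φn := Nat.totient_pos.mpr (by omega)
    omega
  have ha : 0 < a := Nat.log_pos one_lt_two (by nlinarith)
  have hb : 0 < b := Nat.log_pos one_lt_two (by nlinarith)
  have log_n : (a : ℝ) * Real.log 2 ≤ 2 * Real.log n := by
    simpa [a, Real.log_pow] using Nat.log_mul_log_le_log 2 (pow_ne_zero 2 (by omega : n ≠ 0))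
  have log_φn : (b : ℝ) * Real.log 2 ≤ 2 * Real.log φn := by
    simpa [b, Real.log_pow] using Nat.log_mul_log_le_log 2 (pow_ne_zero 2 (by omega : φn ≠ 0))
  have log_two_sq : (12 / 25 : ℝ) < Real.log 2 ^ 2 := by nlinarith [Real.log_two_gt_d9]
  calc (totientLogBound n : ℝ) ≤ (9 * φn * a * b : ℕ) / 25 := Nat.cast_div_le
    _ = 3 / 4 * (12 / 25) * (φn * a * b) := by push_cast; ring
    _ < 3 / 4 * Real.log 2 ^ 2 * (φn * a * b) := by gcongr
    _ = 3 / 4 * φn * (a * Real.log 2) * (b * Real.log 2) := by ring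
    _ ≤ 3 / 4 * φn * (2 * Real.log n) * (2 * Real.log φn) := by gcongr
    _ = 3 * φn * Real.log n * Real.log φn := by ring

theorem P_le_totientLogBound {n : ℕ} (h4 : 4 ≤ n) (h100 : n ≤ 100) :
    P n ≤ totientLogBound n := by
  have hcheck :
      ((List.range' 4 97).all fun n => coprimeClassesHavePrimeLE n (totientLogBound n)) = true := by
    decide +kernel
  exact P_le_of_coprimeClassesHavePrimeLE
    (List.all_eq_true.mp hcheck n (List.mem_range'_1.mpr ⟨h4, by omega⟩))

theorem stmt_8 (n : ℕ) (h4 : 4 ≤ n) (h100 : n ≤ 100) :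
    (P n : ℝ) < 3 * (Nat.totient n : ℝ) * Real.log n * Real.log (Nat.totient n) :=
  (Nat.cast_le.mpr (P_le_totientLogBound h4 h100)).trans_lt (totientLogBound_lt (by omega))
end
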